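/- arXiv:2410.21097 — 9 statements merged into one kernel-verified Lean document; each statement's English description precedes it below -/
import Mathlib

section
/- For a nonexpansive self-map T of a metric space (X,d), the limit lim_{k→∞} d(T^k x, x)/k exists, and its value is independent of the choice of x ∈ X. -/
/-!
Along the orbit of a point `x`, nonexpansiveness makes `n ↦ d(Tⁿx, x)` subadditive, since
`d(Tᵐ⁺ⁿx, x) ≤ d(Tⁿ(Tᵐx), Tⁿx) + d(Tⁿx, x) ≤ d(Tᵐx, x) + d(Tⁿx, x)`, so `d(Tⁿx, x)/n` converges
by Fekete's lemma. For another point `y`, the displacements differ by at most `2 d(x, y)`, which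
disappears after dividing by `n`; hence the limit does not depend on the point.
-/

open Filter Topology

namespace LipschitzWith

variable {X : Type*} [PseudoMetricSpace X] {T : X → X}

theorem dist_iterate_le (hT : LipschitzWith 1 T) (n : ℕ) (x y : X) :
    dist (T^[n] x) (T^[n] y) ≤ dist x y := by
  simpa using (hT.iterate n).dist_le_mul x y

theorem subadditive_dist_iterate_self (hT : LipschitzWith 1 T) (x : X) :
    Subadditive fun n => dist (T^[n] x) x := fun m n =>
  calc dist (T^[m + n] x) x ≤ dist (T^[n] (T^[m] x)) (T^[n] x) + dist (T^[n] x) x := by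
        rw [add_comm m n, Function.iterate_add_apply]
        exact dist_triangle _ _ _
    _ ≤ dist (T^[m] x) x + dist (T^[n] x) x := by gcongr; exact hT.dist_iterate_le n _ _

theorem tendsto_dist_iterate_self_div (hT : LipschitzWith 1 T) (x : X) :
    Tendsto (fun n : ℕ => dist (T^[n] x) x / n) atTop
      (𝓝 (hT.subadditive_dist_iterate_self x).lim) :=
  (hT.subadditive_dist_iterate_self x).tendsto_lim
    ⟨0, by rintro _ ⟨n, rfl⟩; positivity⟩

theorem abs_dist_iterate_self_sub_le (hT : LipschitzWith 1 T) (n : ℕ) (x y : X) :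
    |dist (T^[n] x) x - dist (T^[n] y) y| ≤ 2 * dist x y := by
  have hx := dist_triangle4 (T^[n] x) (T^[n] y) y x
  have hy := dist_triangle4 (T^[n] y) (T^[n] x) x y
  have hxy := hT.dist_iterate_le n x y
  rw [abs_sub_le_iff]
  constructor <;> linarith [dist_comm (T^[n] x) (T^[n] y), dist_comm x y]

theorem tendsto_dist_iterate_self_div_of_tendsto (hT : LipschitzWith 1 T) {y : X} {ρ : ℝ}
    (hy : Tendsto (fun n : ℕ => dist (T^[n] y) y / n) atTop (𝓝 ρ)) (x : X) :
    Tendsto (fun n : ℕ => dist (T^[n] x) x / n) atTop (𝓝 ρ) := by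
  refine hy.congr_dist (squeeze_zero (fun _ => dist_nonneg) (fun n => ?_)
    (tendsto_const_div_atTop_nhds_zero_nat (2 * dist x y)))
  rw [Real.dist_eq, ← sub_div, abs_div, Nat.abs_cast, abs_sub_comm]
  gcongr
  exact hT.abs_dist_iterate_self_sub_le n x y

end LipschitzWith

/-- For a nonexpansive self-map `T` of a metric space `(X,d)`,
the limit `lim_k d(T^k x, x)/k` exists and is independent of `x`. -/
theorem escape_rate_exists_and_independent {X : Type*} [MetricSpace X] [Nonempty X]
    (T : X → X) (hT : ∀ x y : X, dist (T x) (T y) ≤ dist x y) :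
    ∃ ρ : ℝ, ∀ x : X,
      Filter.Tendsto (fun k : ℕ => dist (T^[k] x) x / (k : ℝ)) Filter.atTop (nhds ρ) := by
  have hT₁ : LipschitzWith 1 T := .mk_one hT
  obtain ⟨x₀⟩ := ‹Nonempty X›
  exact ⟨_, hT₁.tendsto_dist_iterate_self_div_of_tendsto (hT₁.tendsto_dist_iterate_self_div x₀)⟩
end

section
/- Let C ⊂ ℝⁿ be a proper cone. A self-map T of the interior of C is nonexpansive in the Funk hemi-metric (Funk(T(x),T(y)) ≤ Funk(x,y) for all x,y ∈ int C) if and only if T is order preserving (x ≤_C y implies T(x) ≤_C T(y) on int C) and positively homogeneous of degree 1 (T(αx) = αT(x) for all α > 0). -/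
/-!
For `x, y` in the interior of `C` the infimum defining `Funk(x, y)` is positive (by pointedness)
and attained (by closedness), and `C` is closed under addition, so `Funk(x, y) ≤ log β` holds
exactly when `x ≤_C β y`. Funk-nonexpansiveness of `T` therefore says that `x ≤_C β y` implies
`T x ≤_C β T y` for every `β > 0`. Taking `β = 1` gives order preservation; the pairs
`x ≤_C α⁻¹ (α x)` and `α x ≤_C α x` give `T (α x) ≤_C α T x ≤_C T (α x)`, hence homogeneity by
pointedness. Conversely, order preservation and homogeneity give `T x ≤_C T (β y) = β T y`.
-/

/-- The Funk hemi-metric of a cone `C`: `Funk(x,y) = log inf {α > 0 | x ≤_C α y}`. -/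
noncomputable def funkMetric {n : ℕ} (C : Set (Fin n → ℝ)) (x y : Fin n → ℝ) : ℝ :=
  Real.log (sInf {α : ℝ | 0 < α ∧ α • y - x ∈ C})

open Set Filter Topology Pointwise

section Cone

variable {E : Type*} [AddCommGroup E] [Module ℝ E] {C : Set E}

theorem add_mem_of_convex_of_smul_mem (hconv : Convex ℝ C)
    (hcone : ∀ x ∈ C, ∀ t : ℝ, 0 ≤ t → t • x ∈ C) {u v : E} (hu : u ∈ C) (hv : v ∈ C) :
    u + v ∈ C := by
  have hmid : (1 / 2 : ℝ) • u + (1 / 2 : ℝ) • v ∈ C :=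
    hconv hu hv (by norm_num) (by norm_num) (by norm_num)
  simpa [smul_add, smul_smul] using hcone _ hmid 2 zero_le_two

def funkScalings (C : Set E) (x y : E) : Set ℝ :=
  {α | 0 < α ∧ α • y - x ∈ C}

theorem bddBelow_funkScalings (x y : E) : BddBelow (funkScalings C x y) :=
  ⟨0, fun _ hα => hα.1.le⟩

variable [TopologicalSpace E] [ContinuousSMul ℝ E]

theorem smul_mem_interior_of_cone (hcone : ∀ x ∈ C, ∀ t : ℝ, 0 ≤ t → t • x ∈ C) {α : ℝ}
    (hα : 0 < α) {x : E} (hx : x ∈ interior C) : α • x ∈ interior C := by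
  have hsub : α • C ⊆ C := by
    rintro _ ⟨z, hz, rfl⟩
    exact hcone z hz α hα.le
  exact interior_mono hsub (by rw [interior_smul₀ hα.ne']; exact smul_mem_smul_set hx)

theorem zero_notMem_interior_of_pointed [Nontrivial E]
    (hpointed : ∀ x ∈ C, -x ∈ C → x = 0) : (0 : E) ∉ interior C := by
  intro h0
  obtain ⟨v, hv⟩ := exists_ne (0 : E)
  have hnear : ∀ᶠ t : ℝ in 𝓝 0, t • v ∈ C := by
    have : Tendsto (fun t : ℝ => t • v) (𝓝 0) (𝓝 0) :=
      (by fun_prop : Continuous fun t : ℝ => t • v).tendsto' 0 0 (zero_smul ℝ v)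
    exact this.eventually (mem_interior_iff_mem_nhds.mp h0)
  have hnear_neg : ∀ᶠ t : ℝ in 𝓝 0, (-t) • v ∈ C :=
    (continuous_neg.tendsto' 0 0 neg_zero).eventually hnear
  obtain ⟨t, ⟨htv, hntv⟩, ht⟩ :=
    (((hnear.and hnear_neg).filter_mono nhdsWithin_le_nhds).and
      (self_mem_nhdsWithin : {t : ℝ | t ≠ 0} ∈ 𝓝[≠] 0)).exists
  exact smul_ne_zero ht hv (hpointed _ htv (by rw [← neg_smul]; exact hntv))

theorem exists_pos_smul_sub_mem [IsTopologicalAddGroup E]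
    (hcone : ∀ x ∈ C, ∀ t : ℝ, 0 ≤ t → t • x ∈ C) (x : E) {y : E} (hy : y ∈ interior C) :
    ∃ α : ℝ, 0 < α ∧ α • y - x ∈ C := by
  have hnear : ∀ᶠ t : ℝ in 𝓝 0, y - t • x ∈ C := by
    have : Tendsto (fun t : ℝ => y - t • x) (𝓝 0) (𝓝 y) :=
      (by fun_prop : Continuous fun t : ℝ => y - t • x).tendsto' 0 y (by simp)
    exact this.eventually (mem_interior_iff_mem_nhds.mp hy)
  obtain ⟨t, hyt, ht⟩ := ((hnear.filter_mono nhdsWithin_le_nhds).and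
    (self_mem_nhdsWithin : Ioi (0 : ℝ) ∈ 𝓝[>] 0)).exists
  refine ⟨t⁻¹, inv_pos.mpr ht, ?_⟩
  simpa [smul_sub, smul_smul, inv_mul_cancel₀ (ne_of_gt ht)] using
    hcone _ hyt t⁻¹ (inv_nonneg.mpr (le_of_lt ht))

theorem smul_sInf_funkScalings_sub_mem [IsTopologicalAddGroup E] (hclosed : IsClosed C)
    (hcone : ∀ x ∈ C, ∀ t : ℝ, 0 ≤ t → t • x ∈ C) (x : E) {y : E} (hy : y ∈ interior C) :
    sInf (funkScalings C x y) • y - x ∈ C := by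
  obtain ⟨α, hα, hmem⟩ := exists_pos_smul_sub_mem hcone x hy
  have hclosed' : IsClosed {α : ℝ | α • y - x ∈ C} := hclosed.preimage (by fun_prop)
  exact hclosed'.closure_subset_iff.mpr (fun _ hβ => hβ.2)
    (csInf_mem_closure ⟨α, hα, hmem⟩ (bddBelow_funkScalings x y))

theorem sInf_funkScalings_le_iff [IsTopologicalAddGroup E] (hclosed : IsClosed C)
    (hconv : Convex ℝ C) (hcone : ∀ x ∈ C, ∀ t : ℝ, 0 ≤ t → t • x ∈ C) (x : E) {y : E}
    (hy : y ∈ interior C) {β : ℝ} (hβ : 0 < β) :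
    sInf (funkScalings C x y) ≤ β ↔ β • y - x ∈ C := by
  refine ⟨fun hle => ?_, fun hmem => csInf_le (bddBelow_funkScalings x y) ⟨hβ, hmem⟩⟩
  have hrest : (β - sInf (funkScalings C x y)) • y ∈ C :=
    hcone y (interior_subset hy) _ (sub_nonneg.mpr hle)
  convert add_mem_of_convex_of_smul_mem hconv hcone
    (smul_sInf_funkScalings_sub_mem hclosed hcone x hy) hrest using 1
  rw [sub_smul]
  abel

theorem sInf_funkScalings_pos [IsTopologicalAddGroup E] [Nontrivial E] (hclosed : IsClosed C)
    (hcone : ∀ x ∈ C, ∀ t : ℝ, 0 ≤ t → t • x ∈ C) (hpointed : ∀ x ∈ C, -x ∈ C → x = 0) {x y : E}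
    (hx : x ∈ interior C) (hy : y ∈ interior C) : 0 < sInf (funkScalings C x y) := by
  have hmem := smul_sInf_funkScalings_sub_mem hclosed hcone x hy
  refine (Real.sInf_nonneg fun _ hα => hα.1.le).lt_of_ne fun h => ?_
  rw [← h, zero_smul, zero_sub] at hmem
  rw [hpointed x (interior_subset hx) hmem] at hx
  exact zero_notMem_interior_of_pointed hpointed hx

theorem orderPreserving_and_homogeneous_of_smul_sub_mem
    (hcone : ∀ x ∈ C, ∀ t : ℝ, 0 ≤ t → t • x ∈ C) (hpointed : ∀ x ∈ C, -x ∈ C → x = 0)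
    {T : E → E} (hT : ∀ x ∈ interior C, ∀ y ∈ interior C, ∀ β : ℝ, 0 < β →
      β • y - x ∈ C → β • T y - T x ∈ C) :
    (∀ x ∈ interior C, ∀ y ∈ interior C, y - x ∈ C → T y - T x ∈ C) ∧
      (∀ α : ℝ, 0 < α → ∀ x ∈ interior C, T (α • x) = α • T x) := by
  refine ⟨fun x hx y hy hxy => by simpa using hT x hx y hy 1 one_pos (by simpa using hxy),
    fun α hα x hx => ?_⟩
  have hαx := smul_mem_interior_of_cone hcone hα hx
  have h0 : (0 : E) ∈ C := by simpa using hcone x (interior_subset hx) 0 le_rfl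
  have hle : α⁻¹ • T (α • x) - T x ∈ C := hT x hx _ hαx _ (inv_pos.mpr hα) (by
    rw [smul_smul, inv_mul_cancel₀ hα.ne', one_smul, sub_self]; exact h0)
  have hge : α • T x - T (α • x) ∈ C := hT _ hαx x hx α hα (by rw [sub_self]; exact h0)
  have hle' : T (α • x) - α • T x ∈ C := by
    simpa [smul_sub, smul_smul, mul_inv_cancel₀ hα.ne'] using hcone _ hle α hα.le
  exact sub_eq_zero.mp (hpointed _ hle' (by rw [neg_sub]; exact hge))

theorem smul_sub_mem_of_orderPreserving_of_homogeneous
    (hcone : ∀ x ∈ C, ∀ t : ℝ, 0 ≤ t → t • x ∈ C) {T : E → E}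
    (hmono : ∀ x ∈ interior C, ∀ y ∈ interior C, y - x ∈ C → T y - T x ∈ C)
    (hhom : ∀ α : ℝ, 0 < α → ∀ x ∈ interior C, T (α • x) = α • T x) :
    ∀ x ∈ interior C, ∀ y ∈ interior C, ∀ β : ℝ, 0 < β → β • y - x ∈ C → β • T y - T x ∈ C :=
  fun x hx y hy β hβ h => hhom β hβ y hy ▸ hmono x hx _ (smul_mem_interior_of_cone hcone hβ hy) h

end Cone

theorem funkMetric_le_log_iff {n : ℕ} [Nontrivial (Fin n → ℝ)] {C : Set (Fin n → ℝ)}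
    (hclosed : IsClosed C) (hconv : Convex ℝ C) (hcone : ∀ x ∈ C, ∀ t : ℝ, 0 ≤ t → t • x ∈ C)
    (hpointed : ∀ x ∈ C, -x ∈ C → x = 0) {x y : Fin n → ℝ} (hx : x ∈ interior C)
    (hy : y ∈ interior C) {β : ℝ} (hβ : 0 < β) :
    funkMetric C x y ≤ Real.log β ↔ β • y - x ∈ C := by
  change Real.log (sInf (funkScalings C x y)) ≤ _ ↔ _
  rw [Real.log_le_log_iff (sInf_funkScalings_pos hclosed hcone hpointed hx hy) hβ]
  exact sInf_funkScalings_le_iff hclosed hconv hcone x hy hβ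

theorem funk_nonexpansive_iff_smul_sub_mem {n : ℕ} [Nontrivial (Fin n → ℝ)]
    {C : Set (Fin n → ℝ)} (hclosed : IsClosed C) (hconv : Convex ℝ C)
    (hcone : ∀ x ∈ C, ∀ t : ℝ, 0 ≤ t → t • x ∈ C) (hpointed : ∀ x ∈ C, -x ∈ C → x = 0)
    {T : (Fin n → ℝ) → (Fin n → ℝ)} (hmaps : MapsTo T (interior C) (interior C)) :
    (∀ x ∈ interior C, ∀ y ∈ interior C, funkMetric C (T x) (T y) ≤ funkMetric C x y) ↔
      ∀ x ∈ interior C, ∀ y ∈ interior C, ∀ β : ℝ, 0 < β → β • y - x ∈ C → β • T y - T x ∈ C := by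
  have hfunk {x y : Fin n → ℝ} (hx : x ∈ interior C) (hy : y ∈ interior C) {β : ℝ}
      (hβ : 0 < β) := funkMetric_le_log_iff hclosed hconv hcone hpointed hx hy hβ
  refine ⟨fun hT x hx y hy β hβ h =>
    (hfunk (hmaps hx) (hmaps hy) hβ).mp ((hT x hx y hy).trans ((hfunk hx hy hβ).mpr h)),
    fun hT x hx y hy => ?_⟩
  have hβ := Real.exp_pos (funkMetric C x y)
  have key := (hfunk (hmaps hx) (hmaps hy) hβ).mpr
    (hT x hx y hy _ hβ ((hfunk hx hy hβ).mp (Real.log_exp _).ge))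
  rwa [Real.log_exp] at key

theorem funk_nonexpansive_iff_orderPreserving_homogeneous_general {n : ℕ} (C : Set (Fin n → ℝ))
    (hclosed : IsClosed C) (hconv : Convex ℝ C)
    (hcone : ∀ x ∈ C, ∀ t : ℝ, 0 ≤ t → t • x ∈ C)
    (hpointed : ∀ x : Fin n → ℝ, x ∈ C → -x ∈ C → x = 0)
    (T : (Fin n → ℝ) → (Fin n → ℝ))
    (hmaps : Set.MapsTo T (interior C) (interior C)) :
    (∀ x ∈ interior C, ∀ y ∈ interior C, funkMetric C (T x) (T y) ≤ funkMetric C x y) ↔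
      ((∀ x ∈ interior C, ∀ y ∈ interior C, y - x ∈ C → T y - T x ∈ C) ∧
        (∀ α : ℝ, 0 < α → ∀ x ∈ interior C, T (α • x) = α • T x)) := by
  rcases subsingleton_or_nontrivial (Fin n → ℝ) with _ | _
  · exact iff_of_true (fun x _ y _ => le_of_eq (by congr 1 <;> exact Subsingleton.elim _ _))
      ⟨fun x hx y _ _ => by rw [Subsingleton.elim (T y - T x) x]; exact interior_subset hx,
        fun _ _ _ _ => Subsingleton.elim _ _⟩
  rw [funk_nonexpansive_iff_smul_sub_mem hclosed hconv hcone hpointed hmaps]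
  exact ⟨orderPreserving_and_homogeneous_of_smul_sub_mem hcone hpointed,
    fun ⟨hmono, hhom⟩ => smul_sub_mem_of_orderPreserving_of_homogeneous hcone hmono hhom⟩

/-- A self-map `T` of the interior of a proper cone `C ⊂ ℝⁿ` is
nonexpansive in the Funk hemi-metric iff it is order preserving and positively
homogeneous of degree 1. -/
theorem funk_nonexpansive_iff_orderPreserving_homogeneous {n : ℕ} (C : Set (Fin n → ℝ))
    (hclosed : IsClosed C) (hconv : Convex ℝ C)
    (hcone : ∀ x ∈ C, ∀ t : ℝ, 0 ≤ t → t • x ∈ C)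
    (hpointed : ∀ x : Fin n → ℝ, x ∈ C → -x ∈ C → x = 0)
    (hint : (interior C).Nonempty)
    (T : (Fin n → ℝ) → (Fin n → ℝ))
    (hmaps : Set.MapsTo T (interior C) (interior C)) :
    (∀ x ∈ interior C, ∀ y ∈ interior C, funkMetric C (T x) (T y) ≤ funkMetric C x y) ↔
      ((∀ x ∈ interior C, ∀ y ∈ interior C, y - x ∈ C → T y - T x ∈ C) ∧
        (∀ α : ℝ, 0 < α → ∀ x ∈ interior C, T (α • x) = α • T x)) :=
  funk_nonexpansive_iff_orderPreserving_homogeneous_general C hclosed hconv hcone hpointed T hmaps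
end

section
/- For invertible matrices a₁,b₁,…,a_k,b_k in GL_n(ℂ), define T_{ab}(x) = b* a* x a b on positive definite Hermitian matrices. Then Funk(T_{a_k b_k} ∘ ⋯ ∘ T_{a₁ b₁}(I), I) = 2 log ‖a₁ b₁ ⋯ a_k b_k‖, where ‖·‖ is the spectral norm and Funk(x,y) = log λ_max(x y⁻¹) on the cone of positive definite Hermitian matrices. -/
open Matrix

/-- The maximal (real) eigenvalue of a complex matrix (well defined for matrices with
real spectrum, such as products of a positive definite matrix by the inverse of one). -/
noncomputable def lamMax {n : ℕ} (m : Matrix (Fin n) (Fin n) ℂ) : ℝ :=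
  sSup {r : ℝ | ∃ v : Fin n → ℂ, v ≠ 0 ∧ m.mulVec v = r • v}

/-!
Composing the congruences turns `I` into `Pᴴ P` with `P = a₁ b₁ ⋯ a_k b_k`. The largest
eigenvalue of `Pᴴ P` is the top of the spectrum of the positive operator `P* P`; for a positive
element of a C*-algebra this is its norm, and `‖P* P‖ = ‖P‖²` by the C*-identity.
-/

theorem eq_star_mul_self_of_congruence {R : Type*} [Monoid R] [StarMul R] {k : ℕ}
    (c : Fin k → R) (X P : ℕ → R) (hX0 : X 0 = 1) (hP0 : P 0 = 1)
    (hXs : ∀ i : Fin k, X (i + 1) = star (c i) * X i * c i)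
    (hPs : ∀ i : Fin k, P (i + 1) = P i * c i) :
    ∀ m ≤ k, X m = star (P m) * P m := by
  intro m
  induction m with
  | zero => simp [hX0, hP0]
  | succ i ih =>
    intro hik
    rw [hXs ⟨i, hik⟩, hPs ⟨i, hik⟩, ih (Nat.le_of_lt hik), star_mul,
      mul_assoc, mul_assoc, mul_assoc]

theorem Matrix.mem_spectrum_iff_exists_mulVec_eq_smul {K ι : Type*} [Field K] [Fintype ι]
    [DecidableEq ι] (M : Matrix ι ι K) (μ : K) :
    μ ∈ spectrum K M ↔ ∃ v, v ≠ 0 ∧ M *ᵥ v = μ • v := by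
  rw [← spectrum_toLin', ← Module.End.hasEigenvalue_iff_mem_spectrum,
    Module.End.hasEigenvalue_iff, Submodule.ne_bot_iff]
  simp only [Module.End.mem_eigenspace_iff, toLin'_apply, and_comm]

theorem lamMax_eq_sSup_spectrum {n : ℕ} (M : Matrix (Fin n) (Fin n) ℂ) :
    lamMax M = sSup (spectrum ℝ (toEuclideanCLM (𝕜 := ℂ) M)) := by
  rw [← spectrum.preimage_algebraMap ℂ, AlgEquiv.spectrum_eq, lamMax]
  congr 1
  ext r
  simp [mem_spectrum_iff_exists_mulVec_eq_smul, Complex.coe_smul]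

theorem CStarAlgebra.sSup_spectrum_eq_norm {A : Type*} [CStarAlgebra A] [PartialOrder A]
    [StarOrderedRing A] {a : A} (ha : 0 ≤ a) : sSup (spectrum ℝ a) = ‖a‖ := by
  cases subsingleton_or_nontrivial A
  · rw [spectrum.of_subsingleton, Real.sSup_empty, Subsingleton.elim a 0, norm_zero]
  refine IsGreatest.csSup_eq ⟨norm_mem_spectrum_of_nonneg ha, fun r hr => ?_⟩
  exact (Real.le_norm_self r).trans (spectrum.norm_le_norm_of_mem hr)

theorem lamMax_conjTranspose_mul_self {n : ℕ} (A : Matrix (Fin n) (Fin n) ℂ) :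
    lamMax (Aᴴ * A) = ‖toEuclideanCLM (𝕜 := ℂ) A‖ ^ 2 := by
  set T := toEuclideanCLM (𝕜 := ℂ) A
  have hT : toEuclideanCLM (𝕜 := ℂ) (Aᴴ * A) = star T * T := by
    rw [map_mul, ← star_eq_conjTranspose, map_star]
  rw [lamMax_eq_sSup_spectrum, hT, CStarAlgebra.sSup_spectrum_eq_norm (star_mul_self_nonneg T),
    CStarRing.norm_star_mul_self, sq]

theorem funk_congruence_eq_two_log_spectralNorm_general (n k : ℕ)
    (a b : Fin k → Matrix (Fin n) (Fin n) ℂ)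
    (X P : ℕ → Matrix (Fin n) (Fin n) ℂ)
    (hX0 : X 0 = 1)
    (hXs : ∀ i : Fin k, X ((i : ℕ) + 1) = (b i)ᴴ * (a i)ᴴ * X (i : ℕ) * a i * b i)
    (hP0 : P 0 = 1)
    (hPs : ∀ i : Fin k, P ((i : ℕ) + 1) = P (i : ℕ) * a i * b i) :
    Real.log (lamMax (X k * (1 : Matrix (Fin n) (Fin n) ℂ)⁻¹)) =
      2 * Real.log ‖Matrix.toEuclideanCLM (𝕜 := ℂ) (P k)‖ := by
  have hXP : X k = (P k)ᴴ * P k :=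
    eq_star_mul_self_of_congruence (fun i => a i * b i) X P hX0 hP0
      (fun i => by rw [hXs i, star_eq_conjTranspose, conjTranspose_mul, Matrix.mul_assoc,
        Matrix.mul_assoc, Matrix.mul_assoc])
      (fun i => by rw [hPs i, Matrix.mul_assoc]) k le_rfl
  rw [inv_one, mul_one, hXP, lamMax_conjTranspose_mul_self, Real.log_pow, Nat.cast_ofNat]

/-- For invertible matrices `a₁,b₁,…,a_k,b_k ∈ GL_n(ℂ)` and the congruence
operators `T_{ab}(x) = bᴴ aᴴ x a b` on positive definite Hermitian matrices, the state
`X k = T_{a_k b_k} ∘ ⋯ ∘ T_{a₁ b₁}(I)` and the product `P k = a₁ b₁ ⋯ a_k b_k` satisfy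
`Funk(X k, I) = 2 log ‖P k‖`, where `Funk(x,y) = log λ_max (x y⁻¹)` and `‖·‖` is the
spectral norm (operator norm on Euclidean space). -/
theorem funk_congruence_eq_two_log_spectralNorm (n k : ℕ)
    (a b : Fin k → Matrix (Fin n) (Fin n) ℂ)
    (ha : ∀ i, IsUnit (a i)) (hb : ∀ i, IsUnit (b i))
    (X P : ℕ → Matrix (Fin n) (Fin n) ℂ)
    (hX0 : X 0 = 1)
    (hXs : ∀ i : Fin k, X ((i : ℕ) + 1) = (b i)ᴴ * (a i)ᴴ * X (i : ℕ) * a i * b i)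
    (hP0 : P 0 = 1)
    (hPs : ∀ i : Fin k, P ((i : ℕ) + 1) = P (i : ℕ) * a i * b i) :
    Real.log (lamMax (X k * (1 : Matrix (Fin n) (Fin n) ℂ)⁻¹)) =
      2 * Real.log ‖Matrix.toEuclideanCLM (𝕜 := ℂ) (P k)‖ :=
  funk_congruence_eq_two_log_spectralNorm_general n k a b X P hX0 hXs hP0 hPs
end

section
/- Let S be an order-preserving self-map of Lip₁ (1-Lipschitz functions from a hemi-metric space (X,d) to (ℝ,δ₁)) that commutes with addition of constants, and suppose there exists v ∈ Lip₁ and λ ∈ ℝ with λ + v ≤ Sv pointwise. Then for every x₀ ∈ X, lim_k [S^k d(·,x₀)](x₀)/k ≥ λ. -/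
/-! Since `v` is 1-Lipschitz, `v - v x₀ ≤ d(·, x₀)`. Iterating the monotone, constant-commuting
map `S` on this inequality and on `λ + v ≤ S v` gives
`kλ + v - v x₀ ≤ S^k v - v x₀ ≤ S^k d(·, x₀)`, and evaluating at `x₀` yields `s_k ≥ kλ`. -/

open Filter Topology

def LipOne {X : Type*} (d : X → X → ℝ) (v : X → ℝ) : Prop :=
  ∀ x y, v x - v y ≤ d x y

section

variable {X : Type*} {d : X → X → ℝ}

theorem LipOne.add_const {v : X → ℝ} (hv : LipOne d v) (c : ℝ) :
    LipOne d (fun y => v y + c) := fun x y => by linarith [hv x y]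

theorem lipOne_dist_left (htri : ∀ x y z, d x z ≤ d x y + d y z) (x₀ : X) :
    LipOne d (fun x => d x x₀) := fun x y => by linarith [htri x y x₀]

variable {S : (X → ℝ) → X → ℝ}

theorem LipOne.iterate (hlip : ∀ v, LipOne d v → LipOne d (S v)) {v : X → ℝ}
    (hv : LipOne d v) (k : ℕ) : LipOne d (S^[k] v) :=
  Function.Iterate.rec _ hv hlip k

theorem iterate_add_const (hlip : ∀ v, LipOne d v → LipOne d (S v))
    (hconst : ∀ v, LipOne d v → ∀ (c : ℝ) (x : X), S (fun y => v y + c) x = S v x + c)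
    {v : X → ℝ} (hv : LipOne d v) (c : ℝ) (k : ℕ) :
    S^[k] (fun y => v y + c) = fun y => S^[k] v y + c := by
  induction k with
  | zero => rfl
  | succ k ih =>
    rw [Function.iterate_succ_apply', Function.iterate_succ_apply', ih]
    exact funext (hconst _ (hv.iterate hlip k) c)

theorem iterate_le_iterate (hlip : ∀ v, LipOne d v → LipOne d (S v))
    (hmono : ∀ v w, LipOne d v → LipOne d w → v ≤ w → S v ≤ S w)
    {v w : X → ℝ} (hv : LipOne d v) (hw : LipOne d w) (hvw : v ≤ w) (k : ℕ) :
    S^[k] v ≤ S^[k] w := by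
  induction k with
  | zero => exact hvw
  | succ k ih =>
    rw [Function.iterate_succ_apply', Function.iterate_succ_apply']
    exact hmono _ _ (hv.iterate hlip k) (hw.iterate hlip k) ih

theorem add_le_iterate_of_add_le (hlip : ∀ v, LipOne d v → LipOne d (S v))
    (hmono : ∀ v w, LipOne d v → LipOne d w → v ≤ w → S v ≤ S w)
    (hconst : ∀ v, LipOne d v → ∀ (c : ℝ) (x : X), S (fun y => v y + c) x = S v x + c)
    {v : X → ℝ} (hv : LipOne d v) {lam : ℝ} (hsub : ∀ x, lam + v x ≤ S v x) (k : ℕ) (x : X) :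
    k * lam + v x ≤ S^[k] v x := by
  induction k generalizing x with
  | zero => simp
  | succ k ih =>
    have hle : (fun y => v y + k * lam) ≤ S^[k] v := fun y => by linarith [ih y]
    calc ((k + 1 : ℕ) : ℝ) * lam + v x = (lam + v x) + k * lam := by push_cast; ring
      _ ≤ S v x + k * lam := by linarith [hsub x]
      _ = S (fun y => v y + k * lam) x := (hconst v hv _ x).symm
      _ ≤ S (S^[k] v) x := hmono _ _ (hv.add_const _) (hv.iterate hlip k) hle x
      _ = S^[k + 1] v x := by rw [Function.iterate_succ_apply']

theorem mul_le_iterate_dist_left (htri : ∀ x y z, d x z ≤ d x y + d y z)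
    (hlip : ∀ v, LipOne d v → LipOne d (S v))
    (hmono : ∀ v w, LipOne d v → LipOne d w → v ≤ w → S v ≤ S w)
    (hconst : ∀ v, LipOne d v → ∀ (c : ℝ) (x : X), S (fun y => v y + c) x = S v x + c)
    {v : X → ℝ} (hv : LipOne d v) {lam : ℝ} (hsub : ∀ x, lam + v x ≤ S v x) (x₀ : X) (k : ℕ) :
    k * lam ≤ S^[k] (fun x => d x x₀) x₀ := by
  have hle : (fun y => v y + -v x₀) ≤ fun x => d x x₀ := fun y => by linarith [hv y x₀]
  have hiter := iterate_le_iterate hlip hmono (hv.add_const _) (lipOne_dist_left htri x₀) hle k x₀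
  rw [iterate_add_const hlip hconst hv] at hiter
  linarith [add_le_iterate_of_add_le hlip hmono hconst hv hsub k x₀]

end

theorem le_of_tendsto_div_of_mul_le {a : ℕ → ℝ} {lam L : ℝ} (ha : ∀ k : ℕ, k * lam ≤ a k)
    (hL : Tendsto (fun k : ℕ => a k / k) atTop (𝓝 L)) : lam ≤ L := by
  refine ge_of_tendsto hL ?_
  filter_upwards [eventually_gt_atTop 0] with k hk
  rw [le_div_iff₀ (by exact_mod_cast hk)]
  linarith [ha k]

theorem subeigenvector_lower_bound_general {X : Type*} (d : X → X → ℝ)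
    (htri : ∀ x y z : X, d x z ≤ d x y + d y z)
    (x₀ : X) (S : (X → ℝ) → (X → ℝ))
    (hlip : ∀ v : X → ℝ, (∀ x y : X, v x - v y ≤ d x y) →
      ∀ x y : X, S v x - S v y ≤ d x y)
    (hmono : ∀ v w : X → ℝ, (∀ x y : X, v x - v y ≤ d x y) →
      (∀ x y : X, w x - w y ≤ d x y) → (∀ x : X, v x ≤ w x) → ∀ x : X, S v x ≤ S w x)
    (hconst : ∀ v : X → ℝ, (∀ x y : X, v x - v y ≤ d x y) →
      ∀ (c : ℝ) (x : X), S (fun y => v y + c) x = S v x + c)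
    (v : X → ℝ) (hv : ∀ x y : X, v x - v y ≤ d x y)
    (lam : ℝ) (hsub : ∀ x : X, lam + v x ≤ S v x) :
    ∀ L : ℝ,
      Filter.Tendsto (fun k : ℕ => (S^[k] (fun x => d x x₀)) x₀ / (k : ℝ))
        Filter.atTop (nhds L) → lam ≤ L :=
  fun _ hL => le_of_tendsto_div_of_mul_le
    (mul_le_iterate_dist_left htri hlip hmono hconst hv hsub x₀) hL

/-- Under the same setting as before, if some `v ∈ Lip₁` satisfies
`λ + v ≤ S v`, then the escape rate `lim_k (S^k d(·,x₀))(x₀)/k` is at least `λ`. -/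
theorem subeigenvector_lower_bound {X : Type*} (d : X → X → ℝ)
    (htri : ∀ x y z : X, d x z ≤ d x y + d y z)
    (hsep : ∀ x y : X, (d x y = 0 ∧ d y x = 0) ↔ x = y)
    (x₀ : X) (S : (X → ℝ) → (X → ℝ))
    (hlip : ∀ v : X → ℝ, (∀ x y : X, v x - v y ≤ d x y) →
      ∀ x y : X, S v x - S v y ≤ d x y)
    (hmono : ∀ v w : X → ℝ, (∀ x y : X, v x - v y ≤ d x y) →
      (∀ x y : X, w x - w y ≤ d x y) → (∀ x : X, v x ≤ w x) → ∀ x : X, S v x ≤ S w x)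
    (hconst : ∀ v : X → ℝ, (∀ x y : X, v x - v y ≤ d x y) →
      ∀ (c : ℝ) (x : X), S (fun y => v y + c) x = S v x + c)
    (v : X → ℝ) (hv : ∀ x y : X, v x - v y ≤ d x y)
    (lam : ℝ) (hsub : ∀ x : X, lam + v x ≤ S v x) :
    ∀ L : ℝ,
      Filter.Tendsto (fun k : ℕ => (S^[k] (fun x => d x x₀)) x₀ / (k : ℝ))
        Filter.atTop (nhds L) → lam ≤ L :=
  subeigenvector_lower_bound_general d htri x₀ S hlip hmono hconst v hv lam hsub
end

section
/- Let S be an order-preserving self-map of a function space that commutes with addition of constants, let λ ∈ ℝ, w a function, and k ≥ 1 such that S^k w ≤ kλ + w. Define θ = min(w, Sw − λ, …, S^{k−1}w − (k−1)λ) (pointwise infimum). Then Sθ ≤ λ + θ pointwise. -/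
/-! Writing `f j = S^[j] w - j λ`, the hypothesis says `f k ≤ f 0`, so the infimum `θ` of
`f 0, …, f (k-1)` is also the infimum of the cyclically shifted family `f 1, …, f k`. Monotonicity
and commutation with constants turn `θ ≤ f j` into `Sθ - λ ≤ f (j+1)`, whence `Sθ - λ ≤ θ`. -/

theorem le_ciInf_fin_of_le_succ {f : ℕ → ℝ} {k : ℕ} (hk : 1 ≤ k) (hcyc : f k ≤ f 0) {a : ℝ}
    (ha : ∀ j < k, a ≤ f (j + 1)) : a ≤ ⨅ j : Fin k, f j := by
  obtain ⟨n, rfl⟩ := Nat.exists_eq_add_of_le' hk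
  refine le_ciInf fun ⟨i, hi⟩ => ?_
  cases i with
  | zero => exact (ha n n.lt_succ_self).trans hcyc
  | succ i => exact ha i (Nat.lt_of_succ_lt hi)

theorem apply_le_apply_sub_of_le_sub {X : Type*} {S : (X → ℝ) → (X → ℝ)}
    (hmono : ∀ u v : X → ℝ, (∀ x : X, u x ≤ v x) → ∀ x : X, S u x ≤ S v x)
    (hconst : ∀ (v : X → ℝ) (c : ℝ) (x : X), S (fun y => v y + c) x = S v x + c)
    {u v : X → ℝ} {c : ℝ} (h : ∀ y, u y ≤ v y - c) (x : X) : S u x ≤ S v x - c := by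
  calc S u x ≤ S (fun y => v y + -c) x := hmono _ _ (fun y => h y) x
    _ = S v x - c := by rw [hconst, sub_eq_add_neg]

/-- If `S` is order preserving and commutes with constants, `S^k w ≤ kλ + w`,
and `θ = min (w, Sw − λ, …, S^{k−1}w − (k−1)λ)`, then `Sθ ≤ λ + θ`. -/
theorem inf_averaging_subeigenvector {X : Type*} (S : (X → ℝ) → (X → ℝ))
    (hmono : ∀ u v : X → ℝ, (∀ x : X, u x ≤ v x) → ∀ x : X, S u x ≤ S v x)
    (hconst : ∀ (v : X → ℝ) (c : ℝ) (x : X), S (fun y => v y + c) x = S v x + c)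
    (w : X → ℝ) (lam : ℝ) (k : ℕ) (hk : 1 ≤ k)
    (hw : ∀ x : X, S^[k] w x ≤ (k : ℝ) * lam + w x)
    (θ : X → ℝ)
    (hθ : ∀ x : X, θ x = ⨅ j : Fin k, (S^[(j : ℕ)] w x - ((j : ℕ) : ℝ) * lam)) :
    ∀ x : X, S θ x ≤ lam + θ x := by
  have hθ_le : ∀ j < k, ∀ y, θ y ≤ S^[j] w y - j * lam := fun j hj y => by
    rw [hθ y]
    exact ciInf_le (Finite.bddBelow_range _) (⟨j, hj⟩ : Fin k)
  intro x
  suffices S θ x - lam ≤ θ x by linarith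
  rw [hθ x]
  have hcyc : S^[k] w x - k * lam ≤ S^[0] w x - (0 : ℕ) * lam := by
    simp only [Function.iterate_zero_apply, Nat.cast_zero, zero_mul, sub_zero]
    linarith [hw x]
  refine le_ciInf_fin_of_le_succ (f := fun j => S^[j] w x - j * lam) hk hcyc fun j hj => ?_
  have hstep := apply_le_apply_sub_of_le_sub hmono hconst (hθ_le j hj) x
  simp only [Function.iterate_succ_apply', Nat.cast_succ]
  linarith
end

section
/- Let S be an order-preserving self-map of a function space that commutes with addition of constants, let λ ∈ ℝ, w a function, and k ≥ 1 such that on a subset C, S^{k}w ≥ kλ + w. Define θ = max(w, Sw − λ, …, S^{k−1}w − (k−1)λ). Then for every x ∈ C, Sθ(x) ≥ λ + θ(x). -/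
/-!
Write `fⱼ = S^[j] w - jλ`, so that `θ = max (f₀, …, f_{k-1})`. Since `S` is monotone and commutes
with constants, `fⱼ ≤ θ` gives `f_{j+1} ≤ Sθ - λ`; this covers `f₁, …, f_k`, and on `C` the
remaining term `f₀ = w` lies below `f_k`.
-/

section OrderPreservingConstantCommuting

variable {X : Type*} {S : (X → ℝ) → X → ℝ}

theorem sub_le_apply_of_forall_sub_le
    (hmono : ∀ u v : X → ℝ, (∀ x : X, u x ≤ v x) → ∀ x : X, S u x ≤ S v x)
    (hconst : ∀ (v : X → ℝ) (c : ℝ) (x : X), S (fun y => v y + c) x = S v x + c)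
    {u v : X → ℝ} {c : ℝ} (h : ∀ y, u y - c ≤ v y) (x : X) : S u x - c ≤ S v x := by
  have := hmono (fun y => u y + -c) v (fun y => by linarith [h y]) x
  rw [hconst] at this
  linarith

theorem iterate_succ_sub_le_apply
    (hmono : ∀ u v : X → ℝ, (∀ x : X, u x ≤ v x) → ∀ x : X, S u x ≤ S v x)
    (hconst : ∀ (v : X → ℝ) (c : ℝ) (x : X), S (fun y => v y + c) x = S v x + c)
    {w θ : X → ℝ} {lam : ℝ} {j : ℕ} (h : ∀ y, S^[j] w y - j * lam ≤ θ y) (x : X) :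
    S^[j + 1] w x - ((j + 1 : ℕ) : ℝ) * lam ≤ S θ x - lam := by
  have := sub_le_apply_of_forall_sub_le hmono hconst h x
  rw [Function.iterate_succ_apply']
  push_cast
  linarith

end OrderPreservingConstantCommuting

/-- If `S` is order preserving and commutes with constants, and on a subset
`C` one has `S^k w ≥ kλ + w`, then `θ = max (w, Sw − λ, …, S^{k−1}w − (k−1)λ)` satisfies
`Sθ ≥ λ + θ` on `C`. -/
theorem sup_averaging_supereigenvector {X : Type*} (S : (X → ℝ) → (X → ℝ))
    (hmono : ∀ u v : X → ℝ, (∀ x : X, u x ≤ v x) → ∀ x : X, S u x ≤ S v x)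
    (hconst : ∀ (v : X → ℝ) (c : ℝ) (x : X), S (fun y => v y + c) x = S v x + c)
    (C : Set X) (w : X → ℝ) (lam : ℝ) (k : ℕ) (hk : 1 ≤ k)
    (hw : ∀ x ∈ C, (k : ℝ) * lam + w x ≤ S^[k] w x)
    (θ : X → ℝ)
    (hθ : ∀ x : X, θ x = ⨆ j : Fin k, (S^[(j : ℕ)] w x - ((j : ℕ) : ℝ) * lam)) :
    ∀ x ∈ C, lam + θ x ≤ S θ x := by
  intro x hx
  have : Nonempty (Fin k) := ⟨⟨0, hk⟩⟩
  have term_le (j : ℕ) (hj : j < k) (y : X) : S^[j] w y - j * lam ≤ θ y := by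
    rw [hθ y]
    exact le_ciSup (f := fun i : Fin k => S^[(i : ℕ)] w y - ((i : ℕ) : ℝ) * lam)
      (Set.finite_range _).bddAbove ⟨j, hj⟩
  have succ_le (j : ℕ) (hj : j < k) :=
    iterate_succ_sub_le_apply hmono hconst (term_le j hj) x
  rw [hθ x, ← le_sub_iff_add_le']
  refine ciSup_le fun ⟨i, hi⟩ => ?_
  rcases i with _ | j
  · have := succ_le (k - 1) (by omega)
    rw [Nat.sub_add_cancel hk] at this
    simp only [Function.iterate_zero_apply, Nat.cast_zero, zero_mul, sub_zero]
    linarith [hw x hx]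
  · exact succ_le j (by omega)
end

section
/- Let C ⊂ ℝⁿ be a proper cone, e* a point in the interior of the dual cone C*, x₀ ∈ int C. Then there exists β ∈ ℝ such that for all x ∈ C ∖ {0}: −β + log⟨x, e*⟩ ≤ Funk(x, x₀) ≤ β + log⟨x, e*⟩. -/
open Metric Real

section Cone

variable {E : Type*} [NormedAddCommGroup E] [NormedSpace ℝ E] {C : Set E} {x₀ x : E}

theorem smul_sub_mem_of_ball_subset (hcone : ∀ x ∈ C, ∀ t : ℝ, 0 ≤ t → t • x ∈ C)
    {ε α : ℝ} (hball : ball x₀ ε ⊆ C) (hα : 0 < α) (hx : ‖x‖ < α * ε) :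
    α • x₀ - x ∈ C := by
  have hmem : x₀ - α⁻¹ • x ∈ ball x₀ ε := by
    rw [mem_ball, dist_eq_norm, sub_sub_cancel_left, norm_neg, norm_smul, norm_inv,
      Real.norm_of_nonneg hα.le, inv_mul_lt_iff₀ hα]
    exact hx
  simpa only [smul_sub, smul_inv_smul₀ hα.ne'] using hcone _ (hball hmem) α hα.le

theorem sInf_smul_sub_mem_le_norm_div (hcone : ∀ x ∈ C, ∀ t : ℝ, 0 ≤ t → t • x ∈ C)
    {ε : ℝ} (hε : 0 < ε) (hball : ball x₀ ε ⊆ C) (x : E) :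
    sInf {α : ℝ | 0 < α ∧ α • x₀ - x ∈ C} ≤ ‖x‖ / ε := by
  refine le_of_forall_gt_imp_ge_of_dense fun α hα => csInf_le ⟨0, fun _ h => h.1.le⟩ ?_
  have hα₀ : 0 < α := (div_nonneg (norm_nonneg x) hε.le).trans_lt hα
  exact ⟨hα₀, smul_sub_mem_of_ball_subset hcone hball hα₀ ((div_lt_iff₀ hε).mp hα)⟩

theorem le_mul_of_smul_sub_mem (φ : E →L[ℝ] ℝ) (hφ : ∀ y ∈ C, 0 ≤ φ y) {α : ℝ}
    (h : α • x₀ - x ∈ C) : φ x ≤ α * φ x₀ := by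
  have := hφ _ h
  rw [map_sub, map_smul, smul_eq_mul] at this
  linarith

theorem div_le_sInf_smul_sub_mem (φ : E →L[ℝ] ℝ) (hφ : ∀ y ∈ C, 0 ≤ φ y) (hx₀ : 0 < φ x₀)
    (hne : {α : ℝ | 0 < α ∧ α • x₀ - x ∈ C}.Nonempty) :
    φ x / φ x₀ ≤ sInf {α : ℝ | 0 < α ∧ α • x₀ - x ∈ C} :=
  le_csInf hne fun _ hα => (div_le_iff₀ hx₀).mpr (le_mul_of_smul_sub_mem φ hφ hα.2)

theorem exists_pos_mul_norm_le [ProperSpace E] (hclosed : IsClosed C)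
    (hcone : ∀ x ∈ C, ∀ t : ℝ, 0 ≤ t → t • x ∈ C) (φ : E →L[ℝ] ℝ)
    (hφ : ∀ x ∈ C, x ≠ 0 → 0 < φ x) : ∃ c > 0, ∀ x ∈ C, c * ‖x‖ ≤ φ x := by
  obtain ⟨c, hc, hcφ⟩ := ((isCompact_sphere (0 : E) 1).inter_left hclosed).exists_forall_le'
    φ.continuous.continuousOn (a := 0) fun y hy => hφ y hy.1 (by rintro rfl; simp at hy)
  refine ⟨c, hc, fun x hx => ?_⟩
  rcases eq_or_ne x 0 with rfl | hx0
  · simp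
  have hxn : 0 < ‖x‖ := norm_pos_iff.mpr hx0
  have := hcφ (‖x‖⁻¹ • x) ⟨hcone x hx _ (inv_nonneg.mpr hxn.le), by simp [norm_smul, hxn.ne']⟩
  rwa [map_smul, smul_eq_mul, le_inv_mul_iff₀ hxn, mul_comm] at this

end Cone

theorem funkMetric_bounds_of_ball_subset {n : ℕ} {C : Set (Fin n → ℝ)}
    (hcone : ∀ x ∈ C, ∀ t : ℝ, 0 ≤ t → t • x ∈ C) (φ : (Fin n → ℝ) →L[ℝ] ℝ)
    (hφ : ∀ x ∈ C, x ≠ 0 → 0 < φ x) {x₀ x : Fin n → ℝ} {ε : ℝ} (hε : 0 < ε)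
    (hball : ball x₀ ε ⊆ C) (hx : x ∈ C) (hx0 : x ≠ 0) :
    log (φ x) - log (φ x₀) ≤ funkMetric C x x₀ ∧ funkMetric C x x₀ ≤ log ‖x‖ - log ε := by
  have hφC : ∀ y ∈ C, 0 ≤ φ y := fun y hy =>
    (eq_or_ne y 0).elim (fun h => by simp [h]) fun h => (hφ y hy h).le
  have hφx := hφ x hx hx0
  have hα : ‖x‖ < (‖x‖ / ε + 1) * ε := by
    rw [add_mul, div_mul_cancel₀ _ hε.ne', one_mul]
    linarith
  have hmem := smul_sub_mem_of_ball_subset hcone hball (by positivity) hα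
  have hφx₀ : 0 < φ x₀ :=
    pos_of_mul_pos_right (hφx.trans_le (le_mul_of_smul_sub_mem φ hφC hmem)) (by positivity)
  have hlow := div_le_sInf_smul_sub_mem φ hφC hφx₀ ⟨_, by positivity, hmem⟩
  have hup := sInf_smul_sub_mem_le_norm_div hcone hε hball x
  rw [← log_div hφx.ne' hφx₀.ne', ← log_div (norm_ne_zero_iff.mpr hx0) hε.ne']
  exact ⟨log_le_log (by positivity) hlow,
    log_le_log ((div_pos hφx hφx₀).trans_le hlow) hup⟩

theorem funk_comparable_to_log_pairing_general {n : ℕ} (C : Set (Fin n → ℝ))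
    (hclosed : IsClosed C)
    (hcone : ∀ x ∈ C, ∀ t : ℝ, 0 ≤ t → t • x ∈ C)
    (es : Fin n → ℝ)
    (hes : ∀ x ∈ C, x ≠ 0 → 0 < ∑ i, x i * es i)
    (x₀ : Fin n → ℝ) (hx₀ : x₀ ∈ interior C) :
    ∃ β : ℝ, ∀ x ∈ C, x ≠ 0 →
      -β + Real.log (∑ i, x i * es i) ≤ funkMetric C x x₀ ∧
      funkMetric C x x₀ ≤ β + Real.log (∑ i, x i * es i) := by
  let φ : (Fin n → ℝ) →L[ℝ] ℝ := LinearMap.toContinuousLinearMap ((dotProductBilin ℝ ℝ).flip es)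
  change ∃ β : ℝ, ∀ x ∈ C, x ≠ 0 →
    -β + log (φ x) ≤ funkMetric C x x₀ ∧ funkMetric C x x₀ ≤ β + log (φ x)
  have hφ : ∀ x ∈ C, x ≠ 0 → 0 < φ x := hes
  obtain ⟨ε, hε, hball⟩ := isOpen_iff.mp isOpen_interior x₀ hx₀
  obtain ⟨c, hc, hcφ⟩ := exists_pos_mul_norm_le hclosed hcone φ hφ
  refine ⟨max (log (φ x₀)) (-log c - log ε), fun x hx hx0 => ?_⟩
  obtain ⟨hlow, hup⟩ :=
    funkMetric_bounds_of_ball_subset hcone φ hφ hε (hball.trans interior_subset) hx hx0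
  have hnorm : log ‖x‖ ≤ log (φ x) - log c := by
    rw [← log_div (hφ x hx hx0).ne' hc.ne']
    exact log_le_log (norm_pos_iff.mpr hx0) ((le_div_iff₀' hc).mpr (hcφ x hx))
  constructor <;> linarith [le_max_left (log (φ x₀)) (-log c - log ε),
    le_max_right (log (φ x₀)) (-log c - log ε)]

/-- For a proper cone `C ⊂ ℝⁿ`, `e*` in the interior of the dual cone
(i.e. pairing positively with every nonzero element of `C`) and `x₀ ∈ int C`, there is
`β ∈ ℝ` such that `−β + log⟨x,e*⟩ ≤ Funk(x,x₀) ≤ β + log⟨x,e*⟩` for all `x ∈ C ∖ {0}`. -/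
theorem funk_comparable_to_log_pairing {n : ℕ} (C : Set (Fin n → ℝ))
    (hclosed : IsClosed C) (hconv : Convex ℝ C)
    (hcone : ∀ x ∈ C, ∀ t : ℝ, 0 ≤ t → t • x ∈ C)
    (hpointed : ∀ x : Fin n → ℝ, x ∈ C → -x ∈ C → x = 0)
    (hint : (interior C).Nonempty)
    (es : Fin n → ℝ)
    (hes : ∀ x ∈ C, x ≠ 0 → 0 < ∑ i, x i * es i)
    (x₀ : Fin n → ℝ) (hx₀ : x₀ ∈ interior C) :
    ∃ β : ℝ, ∀ x ∈ C, x ≠ 0 →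
      -β + Real.log (∑ i, x i * es i) ≤ funkMetric C x x₀ ∧
      funkMetric C x x₀ ≤ β + Real.log (∑ i, x i * es i) :=
  funk_comparable_to_log_pairing_general C hclosed hcone es hes x₀ hx₀
end

section
/- Let A, B ⊂ ℝⁿ be nonempty compact sets, and ‖·‖ a norm on ℝⁿ. Then max_{b∈B} min_{a∈conv(A)} ‖a+b‖ = max over linear functionals ℓ with dual norm ≤ 1 of (max_{b∈B} ℓ(b) + min_{a∈A} ℓ(a)). -/
/-!
For a fixed `b`, the quantity `min_{a ∈ conv A} ‖a + b‖` is the distance from `-b` to the convex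
set `conv A`, and this distance is the best lower bound on `conv A + b` certified by a functional of
dual norm at most `1`: weak duality is `ℓ (a + b) ≤ ‖a + b‖`, strong duality comes from separating
`conv A + b` from the open ball of radius equal to the distance. A linear functional attains its
minimum over `conv A` on `A`, so the certificate equals `ℓ b + min_A ℓ`. Taking the maximum over
`b ∈ B` and exchanging the two maxima gives the theorem.
-/

open Set Metric

theorem LinearMap.sInf_image_le_of_mem_convexHull {E : Type*} [AddCommGroup E] [Module ℝ E]
    {A : Set E} (ℓ : E →ₗ[ℝ] ℝ) (hA : BddBelow (ℓ '' A)) {x : E} (hx : x ∈ convexHull ℝ A) :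
    sInf (ℓ '' A) ≤ ℓ x :=
  let ⟨_, hy, hyx⟩ := (ℓ.concaveOn convex_univ).exists_le_of_mem_convexHull (subset_univ A) hx
  (csInf_le hA (mem_image_of_mem ℓ hy)).trans hyx

section

variable {E : Type*} [NormedAddCommGroup E] [NormedSpace ℝ E]

theorem exists_norm_le_one_sInf_image_norm_le {K : Set E} (hK : Convex ℝ K) :
    ∃ ℓ : E →L[ℝ] ℝ, ‖ℓ‖ ≤ 1 ∧ ∀ x ∈ K, sInf (norm '' K) ≤ ℓ x := by
  set d := sInf (norm '' K)
  have hnorm_bdd : BddBelow (norm '' K) := ⟨0, by rintro _ ⟨x, -, rfl⟩; exact norm_nonneg x⟩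
  have hd_nonneg : 0 ≤ d := Real.sInf_nonneg (by rintro _ ⟨x, -, rfl⟩; exact norm_nonneg x)
  rcases hd_nonneg.eq_or_lt with hd | hd
  · exact ⟨0, by simp, fun x _ => by simp [← hd]⟩
  have hdisj : Disjoint (ball 0 d) K := disjoint_left.2 fun x hx hxK =>
    (mem_ball_zero_iff.1 hx).not_ge (csInf_le hnorm_bdd (mem_image_of_mem _ hxK))
  obtain ⟨f, u, hf_ball, hf_K⟩ :=
    geometric_hahn_banach_open (convex_ball 0 d) isOpen_ball hK hdisj
  have hu : 0 < u := by simpa using hf_ball 0 (mem_ball_self hd)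
  have hf_closedBall : closedBall (0 : E) d ⊆ {z | ‖f z‖ ≤ u} := by
    rw [← closure_ball 0 hd.ne']
    refine closure_minimal (fun z hz => ?_) (isClosed_le f.continuous.norm continuous_const)
    have hneg := hf_ball (-z) (by simpa using hz)
    rw [map_neg] at hneg
    exact abs_le.2 ⟨by linarith, (hf_ball z hz).le⟩
  have hf : ‖f‖ ≤ u / d := f.opNorm_bound_of_ball_bound hd u hf_closedBall
  refine ⟨(d / u) • f, ?_, fun x hx => ?_⟩
  · calc ‖(d / u) • f‖ = d / u * ‖f‖ := by rw [norm_smul, Real.norm_of_nonneg (by positivity)]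
      _ ≤ d / u * (u / d) := by gcongr
      _ = 1 := by field_simp [hd.ne']
  · calc d = d / u * u := by field_simp
      _ ≤ d / u * f x := by gcongr; exact hf_K x hx
      _ = ((d / u) • f) x := rfl

theorem add_sInf_image_le_sInf_norm_add {A : Set E} (hA : A.Nonempty) {ℓ : E →L[ℝ] ℝ}
    (hℓ : ‖ℓ‖ ≤ 1) (hℓA : BddBelow (ℓ '' A)) (b : E) :
    ℓ b + sInf (ℓ '' A) ≤ sInf ((fun a => ‖a + b‖) '' convexHull ℝ A) := by
  refine le_csInf ((hA.mono (subset_convexHull ℝ A)).image _) ?_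
  rintro _ ⟨a, ha, rfl⟩
  calc ℓ b + sInf (ℓ '' A) ≤ ℓ b + ℓ a := by gcongr; exact ℓ.toLinearMap.sInf_image_le_of_mem_convexHull hℓA ha
    _ = ℓ (a + b) := by rw [map_add, add_comm]
    _ ≤ ‖a + b‖ := (le_abs_self _).trans ((ℓ.le_of_opNorm_le hℓ _).trans_eq (one_mul _))

theorem exists_norm_le_one_sInf_norm_add_le {A : Set E} (hA : A.Nonempty) (b : E) :
    ∃ ℓ : E →L[ℝ] ℝ, ‖ℓ‖ ≤ 1 ∧
      sInf ((fun a => ‖a + b‖) '' convexHull ℝ A) ≤ ℓ b + sInf (ℓ '' A) := by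
  obtain ⟨ℓ, hℓ, hle⟩ := exists_norm_le_one_sInf_image_norm_le ((convex_convexHull ℝ A).translate b)
  have hK : norm '' ((fun x => b + x) '' convexHull ℝ A) =
      (fun a => ‖a + b‖) '' convexHull ℝ A := by
    rw [image_image]; simp_rw [add_comm b]
  refine ⟨ℓ, hℓ, ?_⟩
  rw [← hK, ← sub_le_iff_le_add']
  refine le_csInf (hA.image ℓ) ?_
  rintro _ ⟨a, ha, rfl⟩
  have := hle (b + a) (mem_image_of_mem _ (subset_convexHull ℝ A ha))
  rw [map_add] at this
  linarith

theorem bddAbove_image_sInf_norm_add {A B : Set E} (hA : A.Nonempty) (hB : IsCompact B) :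
    BddAbove ((fun b => sInf ((fun a => ‖a + b‖) '' convexHull ℝ A)) '' B) := by
  obtain ⟨a₀, ha₀⟩ := hA
  obtain ⟨M, hM⟩ := (hB.image (continuous_norm.comp (continuous_const_add a₀))).bddAbove
  refine ⟨M, forall_mem_image.2 fun b hb => ?_⟩
  exact (csInf_le ⟨0, by rintro _ ⟨a, -, rfl⟩; exact norm_nonneg _⟩
    (mem_image_of_mem _ (subset_convexHull ℝ A ha₀))).trans (hM (mem_image_of_mem _ hb))

theorem sSup_image_add_sInf_image_le {A B : Set E} (hA : IsCompact A) (hAne : A.Nonempty)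
    (hB : IsCompact B) (hBne : B.Nonempty) {ℓ : E →L[ℝ] ℝ} (hℓ : ‖ℓ‖ ≤ 1) :
    sSup (ℓ '' B) + sInf (ℓ '' A) ≤
      sSup ((fun b => sInf ((fun a => ‖a + b‖) '' convexHull ℝ A)) '' B) := by
  rw [← le_sub_iff_add_le]
  refine csSup_le (hBne.image ℓ) (forall_mem_image.2 fun b hb => ?_)
  rw [le_sub_iff_add_le]
  exact (add_sInf_image_le_sInf_norm_add hAne hℓ (hA.image ℓ.continuous).bddBelow b).trans
    (le_csSup (bddAbove_image_sInf_norm_add hAne hB) (mem_image_of_mem _ hb))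

end

theorem vector_addition_game_value_general {E : Type*} [NormedAddCommGroup E] [NormedSpace ℝ E]
    (A B : Set E) (hA : IsCompact A) (hAne : A.Nonempty)
    (hB : IsCompact B) (hBne : B.Nonempty) :
    sSup ((fun b => sInf ((fun a => ‖a + b‖) '' convexHull ℝ A)) '' B) =
      sSup ((fun ℓ : E →L[ℝ] ℝ => sSup ((fun b => ℓ b) '' B) + sInf ((fun a => ℓ a) '' A)) ''
        {ℓ : E →L[ℝ] ℝ | ‖ℓ‖ ≤ 1}) := by
  have hweak : ∀ ℓ : E →L[ℝ] ℝ, ‖ℓ‖ ≤ 1 → sSup (ℓ '' B) + sInf (ℓ '' A) ≤ _ :=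
    fun ℓ hℓ => sSup_image_add_sInf_image_le hA hAne hB hBne hℓ
  refine le_antisymm (csSup_le (hBne.image _) (forall_mem_image.2 fun b hb => ?_))
    (csSup_le ⟨_, mem_image_of_mem _ (show ‖(0 : E →L[ℝ] ℝ)‖ ≤ 1 by simp)⟩
      (forall_mem_image.2 hweak))
  obtain ⟨ℓ, hℓ, hle⟩ := exists_norm_le_one_sInf_norm_add_le hAne b
  calc _ ≤ ℓ b + sInf (ℓ '' A) := hle
    _ ≤ sSup (ℓ '' B) + sInf (ℓ '' A) := by
      gcongr; exact le_csSup (hB.image ℓ.continuous).bddAbove (mem_image_of_mem ℓ hb)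
    _ ≤ _ := le_csSup ⟨_, forall_mem_image.2 hweak⟩ (mem_image_of_mem _ hℓ)

/-- For nonempty compact `A, B ⊂ ℝⁿ` (a finite-dimensional real normed
space) one has
`max_{b∈B} min_{a∈conv A} ‖a+b‖ = max_{‖ℓ‖* ≤ 1} (max_{b∈B} ℓ(b) + min_{a∈A} ℓ(a))`. -/
theorem vector_addition_game_value {E : Type*} [NormedAddCommGroup E] [NormedSpace ℝ E]
    [FiniteDimensional ℝ E]
    (A B : Set E) (hA : IsCompact A) (hAne : A.Nonempty)
    (hB : IsCompact B) (hBne : B.Nonempty) :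
    sSup ((fun b => sInf ((fun a => ‖a + b‖) '' convexHull ℝ A)) '' B) =
      sSup ((fun ℓ : E →L[ℝ] ℝ => sSup ((fun b => ℓ b) '' B) + sInf ((fun a => ℓ a) '' A)) ''
        {ℓ : E →L[ℝ] ℝ | ‖ℓ‖ ≤ 1}) :=
  vector_addition_game_value_general A B hA hAne hB hBne
end

section
/- Let A ⊂ ℝⁿ be a nonempty compact set. Then (n+1)·conv(A) ⊆ n·conv(A) + A, where k·S denotes the Minkowski sum of k copies of S. -/
/-!
By Carathéodory, a point `x` of `conv A` is a convex combination of at most `n + 1` points of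
`A`, so one of them, `a`, carries weight `w ≥ 1 / (n + 1)`. Subtracting `a` from `(n + 1) • x`
leaves a nonnegative combination of points of `A` with total weight `n`, i.e. a point of
`n • conv A`.
-/

open Pointwise

section

variable {𝕜 E ι : Type*} [Field 𝕜] [LinearOrder 𝕜] [IsStrictOrderedRing 𝕜]
  [AddCommGroup E] [Module 𝕜 E]

theorem Convex.sum_smul_mem_sum_smul {K : Set E} (hK : Convex 𝕜 K) (hKne : K.Nonempty)
    {t : Finset ι} {v : ι → 𝕜} {z : ι → E} (hv : ∀ i ∈ t, 0 ≤ v i) (hz : ∀ i ∈ t, z i ∈ K) :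
    ∑ i ∈ t, v i • z i ∈ (∑ i ∈ t, v i) • K := by
  classical
  induction t using Finset.induction_on with
  | empty => simp [Set.zero_smul_set hKne]
  | insert k t hk ih =>
    rw [Finset.sum_insert hk, Finset.sum_insert hk,
      hK.add_smul (hv k (by simp)) (Finset.sum_nonneg fun i hi => hv i (by simp [hi]))]
    exact Set.add_mem_add (Set.smul_mem_smul_set (hz k (by simp)))
      (ih (fun i hi => hv i (by simp [hi])) (fun i hi => hz i (by simp [hi])))

theorem exists_inv_succ_le_of_sum_eq_one [Fintype ι] [Nonempty ι] {w : ι → 𝕜}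
    (hw : ∑ i, w i = 1) {m : ℕ} (hcard : Fintype.card ι ≤ m + 1) :
    ∃ j, ((m : 𝕜) + 1)⁻¹ ≤ w j := by
  have hsum : ∑ _i : ι, ((m : 𝕜) + 1)⁻¹ ≤ ∑ i, w i := by
    rw [hw, Finset.sum_const, Finset.card_univ, nsmul_eq_mul, ← div_eq_mul_inv,
      div_le_one (by positivity)]
    exact_mod_cast hcard
  obtain ⟨j, -, hj⟩ := Finset.exists_le_of_sum_le Finset.univ_nonempty hsum
  exact ⟨j, hj⟩

theorem succ_smul_sum_smul_mem_smul_convexHull_add [Fintype ι] {s : Set E} {z : ι → E}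
    {w : ι → 𝕜} (hz : ∀ i, z i ∈ s) (hw₀ : ∀ i, 0 ≤ w i) (hw₁ : ∑ i, w i = 1) {m : ℕ} {j : ι}
    (hj : ((m : 𝕜) + 1)⁻¹ ≤ w j) :
    ((m : 𝕜) + 1) • ∑ i, w i • z i ∈ (m : 𝕜) • convexHull 𝕜 s + s := by
  classical
  set v : ι → 𝕜 := fun i => ((m : 𝕜) + 1) * w i - if i = j then 1 else 0
  have hv₀ : ∀ i ∈ Finset.univ, 0 ≤ v i := by
    intro i _
    by_cases hij : i = j
    · subst hij
      simpa [v] using (inv_le_iff_one_le_mul₀' (by positivity : (0 : 𝕜) < m + 1)).mp hj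
    · simpa [v, hij] using mul_nonneg (by positivity : (0 : 𝕜) ≤ m + 1) (hw₀ i)
  have hv₁ : ∑ i, v i = m := by
    simp only [v, Finset.sum_sub_distrib, ← Finset.mul_sum, hw₁, Finset.sum_ite_eq',
      Finset.mem_univ, if_true]
    ring
  have hsplit : ((m : 𝕜) + 1) • ∑ i, w i • z i = ∑ i, v i • z i + z j := by
    simp only [v, sub_smul, Finset.sum_sub_distrib, ite_smul, one_smul, zero_smul,
      Finset.sum_ite_eq', Finset.mem_univ, if_true, Finset.smul_sum, mul_smul]
    abel
  rw [hsplit, ← hv₁]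
  exact Set.add_mem_add
    ((convex_convexHull 𝕜 s).sum_smul_mem_sum_smul ⟨z j, subset_convexHull 𝕜 s (hz j)⟩ hv₀
      fun i _ => subset_convexHull 𝕜 s (hz i))
    (hz j)

theorem succ_smul_convexHull_subset_smul_convexHull_add [FiniteDimensional 𝕜 E] (s : Set E)
    {m : ℕ} (hm : Module.finrank 𝕜 E ≤ m) :
    ((m : 𝕜) + 1) • convexHull 𝕜 s ⊆ (m : 𝕜) • convexHull 𝕜 s + s := by
  rintro _ ⟨x, hx, rfl⟩
  obtain ⟨ι, _, z, w, hzs, hz_indep, hw_pos, hw₁, rfl⟩ :=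
    eq_pos_convex_span_of_mem_convexHull hx
  have hcard : Fintype.card ι ≤ m + 1 :=
    hz_indep.card_le_finrank_succ.trans (by grw [Submodule.finrank_le, hm])
  have : Nonempty ι := by
    by_contra h
    simp [not_nonempty_iff.mp h] at hw₁
  obtain ⟨j, hj⟩ := exists_inv_succ_le_of_sum_eq_one hw₁ hcard
  exact succ_smul_sum_smul_mem_smul_convexHull_add (fun i => hzs ⟨i, rfl⟩)
    (fun i => (hw_pos i).le) hw₁ hj

end

theorem shapley_folkman_inclusion_general {n : ℕ} (A : Set (Fin n → ℝ)) :
    ((n : ℝ) + 1) • convexHull ℝ A ⊆ (n : ℝ) • convexHull ℝ A + A :=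
  succ_smul_convexHull_subset_smul_convexHull_add A (Module.finrank_fin_fun ℝ).le

/-- Shapley–Folkman consequence: For a nonempty compact `A ⊂ ℝⁿ`,
`(n+1)·conv(A) ⊆ n·conv(A) + A`. -/
theorem shapley_folkman_inclusion {n : ℕ} (A : Set (Fin n → ℝ))
    (hA : IsCompact A) (hAne : A.Nonempty) :
    ((n : ℝ) + 1) • convexHull ℝ A ⊆ (n : ℝ) • convexHull ℝ A + A :=
  shapley_folkman_inclusion_general A
end
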